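/- After the Deutsch-Jozsa circuit (Hadamard on control qubit, oracle U_g with target in |−⟩, final Hadamard on control), measuring the control qubit returns 0 with probability 1 if g is constant and returns 1 with probability 1 if g is balanced. -/

import Mathlib

/-- `sign b = (-1)^b` as a complex number. -/
noncomputable def qsign (b : Bool) : ℂ := if b then -1 else 1

/-- Hadamard gate applied to the control (first) qubit of a two-qubit state given by
its coefficients on the computational basis `Bool × Bool`. -/
noncomputable def Hc (ψ : Bool × Bool → ℂ) : Bool × Bool → ℂ :=
  fun p => (1 / Real.sqrt 2) * (ψ (false, p.2) + qsign p.1 * ψ (true, p.2))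

/-- Deutsch oracle `|x⟩|y⟩ ↦ |x⟩|y ⊕ g(x)⟩` acting on coefficient functions. -/
def Ug (g : Bool → Bool) (ψ : Bool × Bool → ℂ) : Bool × Bool → ℂ :=
  fun p => ψ (p.1, xor p.2 (g p.1))

/-- Initial state: control in `|0⟩`, target in `|−⟩ = (|0⟩−|1⟩)/√2`. -/
noncomputable def psi0 : Bool × Bool → ℂ :=
  fun p => (if p.1 = false then 1 else 0) * ((1 / Real.sqrt 2) * qsign p.2)

/-!
The target `|−⟩` is an eigenvector of the bit flip `y ↦ y ⊕ 1` with eigenvalue `-1`, so the oracle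
leaves the state a product with the target and only multiplies the control amplitude of `|x⟩`
by `(-1)^{g x}`. After the two Hadamards the control amplitude of `|b⟩` is
`((-1)^{g 0} + (-1)^b (-1)^{g 1}) / 2`, which has modulus `1` when `b = g 0 ⊕ g 1` and `0` otherwise.
-/

noncomputable def hadamard (a : Bool → ℂ) : Bool → ℂ :=
  fun b => (1 / Real.sqrt 2) * (a false + qsign b * a true)

def ket0 (b : Bool) : ℂ := if b = false then 1 else 0

noncomputable def ketMinus (b : Bool) : ℂ := (1 / Real.sqrt 2) * qsign b

theorem psi0_eq_tensor : psi0 = fun p => ket0 p.1 * ketMinus p.2 := rfl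

theorem qsign_xor (a b : Bool) : qsign (xor a b) = qsign a * qsign b := by
  cases a <;> cases b <;> simp [qsign]

theorem norm_qsign (b : Bool) : ‖qsign b‖ = 1 := by
  cases b <;> simp [qsign]

theorem one_div_sqrt_two_mul_self : (1 / Real.sqrt 2 : ℂ) * (1 / Real.sqrt 2) = 1 / 2 := by
  rw [div_mul_div_comm, one_mul, ← Complex.ofReal_mul, Real.mul_self_sqrt zero_le_two]
  norm_num

theorem Hc_tensor (a t : Bool → ℂ) :
    Hc (fun p => a p.1 * t p.2) = fun p => hadamard a p.1 * t p.2 := by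
  funext p
  simp only [Hc, hadamard]
  ring

theorem Ug_tensor_ketMinus (g : Bool → Bool) (a : Bool → ℂ) :
    Ug g (fun p => a p.1 * ketMinus p.2) = fun p => (qsign (g p.1) * a p.1) * ketMinus p.2 := by
  funext p
  simp only [Ug, ketMinus, qsign_xor]
  ring

theorem hadamard_ket0 (b : Bool) : hadamard ket0 b = 1 / Real.sqrt 2 := by
  simp [hadamard, ket0]

theorem norm_sq_ketMinus (b : Bool) : ‖ketMinus b‖ ^ 2 = 1 / 2 := by
  rw [ketMinus, norm_mul, norm_qsign, mul_one, norm_div, norm_one, Complex.norm_real,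
    Real.norm_of_nonneg (Real.sqrt_nonneg 2), div_pow, Real.sq_sqrt zero_le_two, one_pow]

theorem norm_sq_mul_ketMinus_add (c : ℂ) :
    ‖c * ketMinus false‖ ^ 2 + ‖c * ketMinus true‖ ^ 2 = ‖c‖ ^ 2 := by
  simp only [norm_mul, mul_pow, norm_sq_ketMinus]
  ring

theorem deutsch_circuit_eq (g : Bool → Bool) :
    Hc (Ug g (Hc psi0)) =
      fun p => (1 / 2 * (qsign (g false) + qsign p.1 * qsign (g true))) * ketMinus p.2 := by
  rw [psi0_eq_tensor, Hc_tensor, Ug_tensor_ketMinus,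
    Hc_tensor fun x => qsign (g x) * hadamard ket0 x]
  funext p
  congr 1
  rw [hadamard, hadamard_ket0, hadamard_ket0]
  linear_combination (qsign (g false) + qsign p.1 * qsign (g true)) * one_div_sqrt_two_mul_self

theorem norm_sq_interference (a b c : Bool) :
    ‖1 / 2 * (qsign a + qsign b * qsign c)‖ ^ 2 = if xor a c = b then 1 else 0 := by
  cases a <;> cases b <;> cases c <;> norm_num [qsign]

theorem deutsch_jozsa_measurement (g : Bool → Bool) :
    (‖(Hc (Ug g (Hc psi0))) (false, false)‖ ^ 2 +
        ‖(Hc (Ug g (Hc psi0))) (false, true)‖ ^ 2 =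
      if g false = g true then 1 else 0) ∧
    (‖(Hc (Ug g (Hc psi0))) (true, false)‖ ^ 2 +
        ‖(Hc (Ug g (Hc psi0))) (true, true)‖ ^ 2 =
      if g false = g true then 0 else 1) := by
  simp only [deutsch_circuit_eq, norm_sq_mul_ketMinus_add, norm_sq_interference,
    bne_eq_false_iff_eq, bne_iff_ne, ite_not, and_self]
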